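/- arXiv:2012.07837 — 2 statements merged into one kernel-verified Lean document; each statement's English description precedes it below -/
import Mathlib

section
/- Let M > 0 and let f belong to the class P⁰_H(M). Then the Euclidean distance from f(0) to the boundary of f(𝔻) satisfies d(f(0), ∂f(𝔻)) ≥ 1 + 2M Σ_{n=2}^∞ (−1)^{n−1}/(n(n−1)) = 1 + 2M(1 − 2 ln 2). -/
open Filter MeasureTheory

/-- Euclidean distance from `f 0` to the boundary of `f(𝔻)`, defined as
`liminf_{|z| → 1⁻} |f z - f 0|`. -/
noncomputable def bdyDist (f : ℂ → ℂ) : ℝ :=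
  Filter.liminf (fun z : ℂ => ‖f z - f 0‖)
    (Filter.comap (fun z : ℂ => ‖z‖) (nhdsWithin 1 (Set.Iio 1)))

/-- `f = h + conj g` belongs to the class `P⁰_H(M)`:  `h z = z + ∑_{n≥2} a n * z^n`,
`g z = ∑_{n≥2} b n * z^n` on the unit disk, and `Re (z h''(z)) > -M + |z g''(z)|` there. -/
def PH0 (M : ℝ) (a b : ℕ → ℂ) (h g : ℂ → ℂ) : Prop :=
  (∀ z ∈ Metric.ball (0 : ℂ) 1,
      HasSum (fun n : ℕ => a (n + 2) * z ^ (n + 2)) (h z - z)) ∧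
  (∀ z ∈ Metric.ball (0 : ℂ) 1,
      HasSum (fun n : ℕ => b (n + 2) * z ^ (n + 2)) (g z)) ∧
  (∀ z ∈ Metric.ball (0 : ℂ) 1,
      -M + ‖z * deriv (deriv g) z‖ < (z * deriv (deriv h) z).re)

/-!
For `‖ε‖ = 1` the analytic function `φ = h + ε g` satisfies `φ 0 = 0`, `φ' 0 = 1` and
`Re (z φ'') > -M`, so `z φ'' + M` has positive real part and the Carathéodory bounds (the Schwarz
lemma applied to its Cayley transform) control `z φ''`. Comparing along radii twice gives
`(1 + 2M) r - 2M (1 + r) log (1 + r) ≤ ‖φ z‖ ≤ 1 + 2M` for `r = ‖z‖`. At each point `z`,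
`h + conj g` coincides with `h + ε g` for some unimodular `ε`, so `f` obeys the same bounds, and
letting `r → 1` gives `1 + 2M (1 - 2 log 2)` (the upper bound keeps the real `liminf` away from its
junk value). The series is summed by Abel's theorem from
`∑ cₙ xⁿ = (x - (1 + x) log (1 + x)) / x²`.
-/

open Metric Set Topology ComplexConjugate

lemma summable_neg_one_pow_div_mul :
    Summable fun n : ℕ => (-1 : ℝ) ^ (n + 1) / (((n : ℝ) + 2) * ((n : ℝ) + 1)) := by
  refine Summable.of_norm_bounded
    ((summable_nat_add_iff 1).mpr (Real.summable_one_div_nat_pow.mpr one_lt_two)) fun n => ?_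
  rw [norm_div, norm_pow, norm_neg, norm_one, one_pow, Real.norm_of_nonneg (by positivity)]
  push_cast
  gcongr
  nlinarith

lemma hasSum_neg_one_pow_div_mul_mul_pow {x : ℝ} (hx : |x| < 1) (hx0 : x ≠ 0) :
    HasSum (fun n : ℕ => (-1 : ℝ) ^ (n + 1) / (((n : ℝ) + 2) * ((n : ℝ) + 1)) * x ^ n)
      ((x - (1 + x) * Real.log (1 + x)) / x ^ 2) := by
  have hlog := Real.hasSum_pow_div_log_of_abs_lt_one (x := -x) (by rwa [abs_neg])
  rw [sub_neg_eq_add] at hlog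
  have hshift := (hasSum_nat_add_iff' 1).mpr hlog
  have hsum := ((hlog.mul_left x).add hshift).div_const (x ^ 2)
  rw [show (x * -Real.log (1 + x) + (-Real.log (1 + x) - ∑ i ∈ Finset.range 1,
      (-x) ^ (i + 1) / ((i : ℝ) + 1))) = x - (1 + x) * Real.log (1 + x) by simp; ring] at hsum
  -- partial fractions: `cₙ x ^ (n + 2) = x (-x) ^ (n + 1) / (n + 1) + (-x) ^ (n + 2) / (n + 2)`
  refine hsum.congr_fun fun n => ?_
  simp only [neg_pow x, pow_succ]
  push_cast
  field_simp
  ring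

theorem tsum_neg_one_pow_div_mul :
    ∑' n : ℕ, (-1 : ℝ) ^ (n + 1) / (((n : ℝ) + 2) * ((n : ℝ) + 1)) = 1 - 2 * Real.log 2 := by
  have habel := Real.tendsto_tsum_powerSeries_nhdsWithin_lt
    summable_neg_one_pow_div_mul.hasSum.tendsto_sum_nat
  have hclosed : Tendsto (fun x : ℝ => (x - (1 + x) * Real.log (1 + x)) / x ^ 2) (𝓝[<] 1)
      (𝓝 (1 - 2 * Real.log 2)) := by
    have : ContinuousAt (fun x : ℝ => (x - (1 + x) * Real.log (1 + x)) / x ^ 2) 1 := by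
      fun_prop (disch := norm_num)
    convert this.tendsto.mono_left nhdsWithin_le_nhds using 2
    norm_num
  refine tendsto_nhds_unique (habel.congr' ?_) hclosed
  filter_upwards [Ioo_mem_nhdsLT zero_lt_one] with x hx
  exact (hasSum_neg_one_pow_div_mul_mul_pow (by rw [abs_of_pos hx.1]; exact hx.2)
    hx.1.ne').tsum_eq

lemma eball_zero_one_eq_ball : eball (0 : ℂ) 1 = ball 0 1 := by
  simpa using Metric.eball_coe (x := (0 : ℂ)) (ε := 1)

theorem hasFPowerSeriesOnBall_ofScalars_of_hasSum {c : ℕ → ℂ} {F : ℂ → ℂ}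
    (hF : ∀ z ∈ ball (0 : ℂ) 1, HasSum (fun n => c n * z ^ n) (F z)) :
    HasFPowerSeriesOnBall F (FormalMultilinearSeries.ofScalars ℂ c) 0 1 where
  r_le := by
    refine ENNReal.le_of_forall_nnreal_lt fun r hr => ?_
    have hr : ((r : ℝ) : ℂ) ∈ ball (0 : ℂ) 1 := by simpa using hr
    refine FormalMultilinearSeries.le_radius_of_tendsto _
      (l := ‖(0 : ℂ)‖) ((hF _ hr).summable.tendsto_atTop_zero.norm.congr fun n => ?_)
    simp
  r_pos := one_pos
  hasSum {y} hy := by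
    rw [eball_zero_one_eq_ball] at hy
    simpa [FormalMultilinearSeries.ofScalars_apply_eq, mul_comm] using hF y hy

theorem differentiableOn_of_hasSum_sub_mul {c : ℕ → ℂ} {c₁ : ℂ} {F : ℂ → ℂ}
    (hF : ∀ z ∈ ball (0 : ℂ) 1, HasSum (fun n => c (n + 2) * z ^ (n + 2)) (F z - c₁ * z)) :
    DifferentiableOn ℂ F (ball 0 1) ∧ F 0 = 0 ∧ deriv F 0 = c₁ := by
  obtain ⟨d, hd0, hd1, hd2⟩ : ∃ d : ℕ → ℂ, d 0 = 0 ∧ d 1 = c₁ ∧ ∀ n, d (n + 2) = c (n + 2) :=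
    ⟨Function.update (Function.update c 0 0) 1 c₁, by simp, by simp, fun n => by simp⟩
  have hd : ∀ z ∈ ball (0 : ℂ) 1, HasSum (fun n => d n * z ^ n) (F z) := by
    intro z hz
    refine (hasSum_nat_add_iff' 2).mp ?_
    simpa [hd0, hd1, hd2, Finset.sum_range_succ] using hF z hz
  have hP := hasFPowerSeriesOnBall_ofScalars_of_hasSum hd
  refine ⟨eball_zero_one_eq_ball ▸ hP.differentiableOn, ?_, ?_⟩
  · have h0 : HasSum (fun _ : ℕ => (0 : ℂ)) (F 0) := by simpa using hF 0 (mem_ball_self one_pos)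
    exact h0.unique hasSum_zero
  · simp [hP.hasFPowerSeriesAt.deriv, hd1]

lemma re_div_one_add_le {w : ℂ} {r : ℝ} (hw : ‖w‖ ≤ r) (hr : r < 1) :
    (w / (1 + w)).re ≤ r / (1 + r) := by
  have hre := Complex.re_le_norm w
  have hsq : w.re ^ 2 + w.im ^ 2 = ‖w‖ ^ 2 := by
    rw [Complex.sq_norm, Complex.normSq_apply]; ring
  have hden : 0 < Complex.normSq (1 + w) := by
    refine Complex.normSq_pos.mpr fun h => ?_
    rw [show w = -1 by linear_combination h, norm_neg, norm_one] at hw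
    linarith
  rw [Complex.div_re, ← add_div, div_le_div_iff₀ hden (by linarith [norm_nonneg w]),
    Complex.normSq_apply]
  simp only [Complex.add_re, Complex.add_im, Complex.one_re, Complex.one_im, zero_add]
  nlinarith [mul_nonneg (sub_nonneg.mpr hre) (sub_nonneg.mpr hr.le), norm_nonneg w,
    mul_nonneg (norm_nonneg w) (sub_nonneg.mpr hw)]

lemma norm_div_one_add_le {w : ℂ} {r : ℝ} (hw : ‖w‖ ≤ r) (hr : r < 1) :
    ‖w / (1 + w)‖ ≤ r / (1 - r) := by
  have hlow : 1 - ‖w‖ ≤ ‖1 + w‖ := by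
    simpa using norm_sub_norm_le (1 : ℂ) (-w)
  rw [norm_div]
  calc ‖w‖ / ‖1 + w‖ ≤ ‖w‖ / (1 - ‖w‖) :=
        div_le_div_of_nonneg_left (norm_nonneg w) (by linarith) hlow
    _ ≤ r / (1 - r) := by
        rw [div_le_div_iff₀ (by linarith) (by linarith)]
        nlinarith

section Caratheodory

variable {q : ℂ → ℂ} {c : ℝ} {z : ℂ}

/-- The Cayley transform `(c - q) / (c + q)` maps the disk into itself and fixes `0`, so by the
Schwarz lemma it is at most `‖z‖` in modulus. -/
lemma exists_norm_le_sub_eq_of_re_pos (hq : DifferentiableOn ℂ q (ball 0 1))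
    (hre : ∀ z ∈ ball (0 : ℂ) 1, 0 < (q z).re) (hq0 : q 0 = c) (hz : z ∈ ball (0 : ℂ) 1) :
    ∃ w : ℂ, ‖w‖ ≤ ‖z‖ ∧ q z - c = -(2 * c) * (w / (1 + w)) := by
  have hc : 0 < c := by simpa [hq0] using hre 0 (mem_ball_self one_pos)
  have hden : ∀ z ∈ ball (0 : ℂ) 1, (c : ℂ) + q z ≠ 0 := fun z hz h => by
    have := congrArg Complex.re h
    simp only [Complex.add_re, Complex.ofReal_re, Complex.zero_re] at this
    linarith [hre z hz]
  set ω : ℂ → ℂ := fun z => (c - q z) / (c + q z)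
  have hmaps : MapsTo ω (ball 0 1) (closedBall 0 1) := by
    intro z hz
    rw [mem_closedBall_zero_iff, norm_div, div_le_one (norm_pos_iff.mpr (hden z hz)),
      ← sq_le_sq₀ (norm_nonneg _) (norm_nonneg _), Complex.sq_norm, Complex.sq_norm]
    simp only [Complex.normSq_apply, Complex.sub_re, Complex.add_re, Complex.sub_im,
      Complex.add_im, Complex.ofReal_re, Complex.ofReal_im]
    nlinarith [hre z hz]
  have hω : ‖ω z‖ ≤ ‖z‖ := Complex.norm_le_norm_of_mapsTo_ball
    (((differentiableOn_const _).sub hq).div ((differentiableOn_const _).add hq) hden) hmaps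
    (by simp [ω, hq0]) (mem_ball_zero_iff.mp hz)
  refine ⟨ω z, hω, ?_⟩
  have hc' : (c : ℂ) ≠ 0 := Complex.ofReal_ne_zero.mpr hc.ne'
  have h1 := hden z hz
  have h2 : 1 + ω z = 2 * c / (c + q z) := by
    simp only [ω]
    field_simp
    ring
  rw [h2]
  simp only [ω]
  field_simp
  ring

lemma neg_le_re_sub_of_re_pos (hq : DifferentiableOn ℂ q (ball 0 1))
    (hre : ∀ z ∈ ball (0 : ℂ) 1, 0 < (q z).re) (hq0 : q 0 = c) (hz : z ∈ ball (0 : ℂ) 1) :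
    -(2 * c * ‖z‖ / (1 + ‖z‖)) ≤ (q z - c).re := by
  have hc : 0 ≤ c := by simpa [hq0] using (hre 0 (mem_ball_self one_pos)).le
  obtain ⟨w, hw, hqw⟩ := exists_norm_le_sub_eq_of_re_pos hq hre hq0 hz
  have hbound := re_div_one_add_le hw (mem_ball_zero_iff.mp hz)
  rw [hqw, show -(2 * (c : ℂ)) = ((-(2 * c) : ℝ) : ℂ) by push_cast; ring, Complex.re_ofReal_mul]
  calc -(2 * c * ‖z‖ / (1 + ‖z‖)) = -(2 * c) * (‖z‖ / (1 + ‖z‖)) := by ring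
    _ ≤ -(2 * c) * (w / (1 + w)).re := mul_le_mul_of_nonpos_left hbound (by linarith)

lemma norm_sub_le_of_re_pos (hq : DifferentiableOn ℂ q (ball 0 1))
    (hre : ∀ z ∈ ball (0 : ℂ) 1, 0 < (q z).re) (hq0 : q 0 = c) (hz : z ∈ ball (0 : ℂ) 1) :
    ‖q z - c‖ ≤ 2 * c * ‖z‖ / (1 - ‖z‖) := by
  have hc : 0 ≤ c := by simpa [hq0] using (hre 0 (mem_ball_self one_pos)).le
  obtain ⟨w, hw, hqw⟩ := exists_norm_le_sub_eq_of_re_pos hq hre hq0 hz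
  have hbound := norm_div_one_add_le hw (mem_ball_zero_iff.mp hz)
  rw [hqw, norm_mul, norm_neg, norm_mul, Complex.norm_ofNat, Complex.norm_real,
    Real.norm_of_nonneg hc, mul_div_assoc]
  gcongr

end Caratheodory

lemma conj_div_norm_mul_self (v : ℂ) : conj v / ‖v‖ * v = ‖v‖ := by
  rcases eq_or_ne v 0 with rfl | hv
  · simp
  · rw [div_mul_eq_mul_div, Complex.conj_mul', sq, mul_div_assoc,
      div_self (Complex.ofReal_ne_zero.mpr (norm_ne_zero_iff.mpr hv)), mul_one]

lemma norm_conj_div_norm_le_one (v : ℂ) : ‖conj v / ‖v‖‖ ≤ 1 := by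
  rw [norm_div, Complex.norm_conj, Complex.norm_real, norm_norm]
  exact div_self_le_one _

lemma norm_ofReal_mul_of_nonneg {t : ℝ} (ht : 0 ≤ t) (z : ℂ) : ‖(t : ℂ) * z‖ = t * ‖z‖ := by
  rw [norm_mul, Complex.norm_real, Real.norm_of_nonneg ht]

section Radial

variable {F : ℂ → ℂ} {G G' : ℝ → ℝ} {R : ℝ} {z : ℂ}

lemma ofReal_mul_mem_ball {t : ℝ} (ht : t ∈ Icc (0 : ℝ) 1) (hz : z ∈ ball (0 : ℂ) R) :
    (t : ℂ) * z ∈ ball (0 : ℂ) R := by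
  rw [mem_ball_zero_iff] at hz ⊢
  rw [norm_ofReal_mul_of_nonneg ht.1]
  nlinarith [norm_nonneg z, ht.2]

lemma re_ofReal_mul_mul (t : ℝ) (z w : ℂ) : ((t : ℂ) * z * w).re = t * (z * w).re := by
  rw [mul_assoc, Complex.re_ofReal_mul]

/-- `t ↦ G (t ‖z‖) - Re F (t z)` is monotone on `[0, 1]`. -/
theorem re_sub_le_of_radial (hF : DifferentiableOn ℂ F (ball 0 R)) (hz : z ∈ ball (0 : ℂ) R)
    (hG : ∀ s ∈ Icc 0 ‖z‖, HasDerivAt G (G' s) s)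
    (hle : ∀ t ∈ Ioo (0 : ℝ) 1, (t * z * deriv F (t * z)).re ≤ t * ‖z‖ * G' (t * ‖z‖)) :
    (F z - F 0).re ≤ G ‖z‖ - G 0 := by
  set u : ℝ → ℝ := fun t => G (t * ‖z‖) - (F (t * z)).re
  have hu : ∀ t ∈ Icc (0 : ℝ) 1,
      HasDerivAt u (G' (t * ‖z‖) * ‖z‖ - (deriv F (t * z) * z).re) t := by
    intro t ht
    have hFt : HasDerivAt (fun w : ℂ => F (w * z)) (deriv F (t * z) * z) t :=
      HasDerivAt.comp (h := fun w : ℂ => w * z) _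
        (hF.differentiableAt (isOpen_ball.mem_nhds (ofReal_mul_mem_ball ht hz))).hasDerivAt
        (hasDerivAt_mul_const z)
    have hGt := (hG (t * ‖z‖) ⟨by nlinarith [norm_nonneg z, ht.1],
      by nlinarith [norm_nonneg z, ht.2]⟩).comp t (hasDerivAt_mul_const ‖z‖)
    exact hGt.sub hFt.real_of_complex
  have hmono : MonotoneOn u (Icc 0 1) := by
    refine monotoneOn_of_hasDerivWithinAt_nonneg (convex_Icc 0 1)
      (fun t ht => (hu t ht).continuousAt.continuousWithinAt)
      (fun t ht => (hu t (interior_subset ht)).hasDerivWithinAt) fun t ht => ?_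
    rw [interior_Icc] at ht
    have hle' := hle t ht
    rw [re_ofReal_mul_mul, mul_assoc] at hle'
    have := le_of_mul_le_mul_left hle' ht.1
    rw [mul_comm (deriv F _)]
    linarith
  have := hmono ⟨le_rfl, zero_le_one⟩ ⟨zero_le_one, le_rfl⟩ zero_le_one
  simp only [u, Complex.ofReal_zero, Complex.ofReal_one, zero_mul, one_mul] at this
  rw [Complex.sub_re]
  linarith

theorem le_re_sub_of_radial (hF : DifferentiableOn ℂ F (ball 0 R)) (hz : z ∈ ball (0 : ℂ) R)
    (hG : ∀ s ∈ Icc 0 ‖z‖, HasDerivAt G (G' s) s)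
    (hle : ∀ t ∈ Ioo (0 : ℝ) 1, t * ‖z‖ * G' (t * ‖z‖) ≤ (t * z * deriv F (t * z)).re) :
    G ‖z‖ - G 0 ≤ (F z - F 0).re := by
  have := re_sub_le_of_radial (F := -F) (G := -G) (G' := -G') hF.neg hz
    (fun s hs => (hG s hs).neg) fun t ht => by
      simp only [deriv.neg', Pi.neg_apply, mul_neg, Complex.neg_re]
      linarith [hle t ht]
  simp only [Pi.neg_apply, Complex.sub_re, Complex.neg_re] at this ⊢
  linarith

theorem norm_sub_le_of_radial (hF : DifferentiableOn ℂ F (ball 0 R)) (hz : z ∈ ball (0 : ℂ) R)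
    (hG : ∀ s ∈ Icc 0 ‖z‖, HasDerivAt G (G' s) s)
    (hle : ∀ t ∈ Ioo (0 : ℝ) 1, ‖t * z * deriv F (t * z)‖ ≤ t * ‖z‖ * G' (t * ‖z‖)) :
    ‖F z - F 0‖ ≤ G ‖z‖ - G 0 := by
  set e := conj (F z - F 0) / ‖F z - F 0‖
  have := re_sub_le_of_radial (F := fun w => e * F w) ((differentiableOn_const e).mul hF) hz hG
    fun t ht => by
      rw [deriv_const_mul_field']
      calc (t * z * (e * deriv F (t * z))).re ≤ ‖e * (t * z * deriv F (t * z))‖ := by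
            rw [mul_left_comm]; exact Complex.re_le_norm _
        _ ≤ ‖t * z * deriv F (t * z)‖ := by
            rw [norm_mul]
            exact mul_le_of_le_one_left (norm_nonneg _) (norm_conj_div_norm_le_one _)
        _ ≤ t * ‖z‖ * G' (t * ‖z‖) := hle t ht
  rwa [← mul_sub, conj_div_norm_mul_self, Complex.ofReal_re] at this

end Radial

section Growth

variable {F φ : ℂ → ℂ} {M : ℝ} {z : ℂ}

lemma neg_le_re_mul_deriv (hF : DifferentiableOn ℂ F (ball 0 1))
    (hre : ∀ z ∈ ball (0 : ℂ) 1, -M < (z * deriv F z).re) (hz : z ∈ ball (0 : ℂ) 1) :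
    -(2 * M * ‖z‖ / (1 + ‖z‖)) ≤ (z * deriv F z).re := by
  simpa using neg_le_re_sub_of_re_pos (q := fun w => w * deriv F w + M) (c := M)
    ((differentiableOn_id.mul (hF.deriv isOpen_ball)).add_const _)
    (fun w hw => by simpa [neg_lt_iff_pos_add] using hre w hw) (by simp) hz

lemma norm_mul_deriv_le (hF : DifferentiableOn ℂ F (ball 0 1))
    (hre : ∀ z ∈ ball (0 : ℂ) 1, -M < (z * deriv F z).re) (hz : z ∈ ball (0 : ℂ) 1) :
    ‖z * deriv F z‖ ≤ 2 * M * ‖z‖ / (1 - ‖z‖) := by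
  simpa using norm_sub_le_of_re_pos (q := fun w => w * deriv F w + M) (c := M)
    ((differentiableOn_id.mul (hF.deriv isOpen_ball)).add_const _)
    (fun w hw => by simpa [neg_lt_iff_pos_add] using hre w hw) (by simp) hz

lemma neg_two_mul_log_le_re_sub (hF : DifferentiableOn ℂ F (ball 0 1))
    (hre : ∀ z ∈ ball (0 : ℂ) 1, -M < (z * deriv F z).re) (hz : z ∈ ball (0 : ℂ) 1) :
    -(2 * M * Real.log (1 + ‖z‖)) ≤ (F z - F 0).re := by
  have hG : ∀ s ∈ Icc 0 ‖z‖, HasDerivAt (fun s => -(2 * M * Real.log (1 + s)))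
      (-(2 * M * (1 / (1 + s)))) s := fun s hs =>
    (((hasDerivAt_id s).const_add 1).log (by simp; linarith [hs.1])).const_mul (2 * M) |>.neg
  simpa using le_re_sub_of_radial hF hz hG fun t ht => by
    have hw := neg_le_re_mul_deriv hF hre (ofReal_mul_mem_ball (Ioo_subset_Icc_self ht) hz)
    rw [norm_ofReal_mul_of_nonneg ht.1.le] at hw
    convert hw using 1
    ring

lemma norm_sub_le_neg_two_mul_log (hF : DifferentiableOn ℂ F (ball 0 1))
    (hre : ∀ z ∈ ball (0 : ℂ) 1, -M < (z * deriv F z).re) (hz : z ∈ ball (0 : ℂ) 1) :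
    ‖F z - F 0‖ ≤ -(2 * M * Real.log (1 - ‖z‖)) := by
  have hz1 := mem_ball_zero_iff.mp hz
  have hG : ∀ s ∈ Icc 0 ‖z‖, HasDerivAt (fun s => -(2 * M * Real.log (1 - s)))
      (2 * M * (1 / (1 - s))) s := fun s hs =>
    (((hasDerivAt_id s).const_sub 1).log (by simp; linarith [hs.2])).const_mul (2 * M)
      |>.neg |>.congr_deriv (by simp; ring)
  simpa using norm_sub_le_of_radial hF hz hG fun t ht => by
    have hw := norm_mul_deriv_le hF hre (ofReal_mul_mem_ball (Ioo_subset_Icc_self ht) hz)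
    rw [norm_ofReal_mul_of_nonneg ht.1.le] at hw
    convert hw using 1
    ring

theorem growth_lower_bound (hφ : DifferentiableOn ℂ φ (ball 0 1)) (h0 : φ 0 = 0)
    (h1 : deriv φ 0 = 1) (hre : ∀ z ∈ ball (0 : ℂ) 1, -M < (z * deriv (deriv φ) z).re)
    (hz : z ∈ ball (0 : ℂ) 1) :
    (1 + 2 * M) * ‖z‖ - 2 * M * (1 + ‖z‖) * Real.log (1 + ‖z‖) ≤ ‖φ z‖ := by
  have hG : ∀ s ∈ Icc 0 ‖z‖,
      HasDerivAt (fun s => (1 + 2 * M) * s - 2 * M * ((1 + s) * Real.log (1 + s)))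
        (1 - 2 * M * Real.log (1 + s)) s := fun s hs => by
    have h1s : 1 + s ≠ 0 := by linarith [hs.1]
    refine (((hasDerivAt_id s).const_mul (1 + 2 * M)).sub
      ((((hasDerivAt_id s).const_add 1).mul (((hasDerivAt_id s).const_add 1).log h1s)).const_mul
        (2 * M))).congr_deriv ?_
    simp only [id, mul_one]
    field_simp
    ring
  set e := conj z / ‖z‖
  have hrot := le_re_sub_of_radial (F := fun w => e * φ w)
    ((differentiableOn_const e).mul hφ) hz hG fun t ht => by
      have hderiv := neg_two_mul_log_le_re_sub (hφ.deriv isOpen_ball) hre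
        (ofReal_mul_mem_ball (Ioo_subset_Icc_self ht) hz)
      rw [h1, norm_ofReal_mul_of_nonneg ht.1.le] at hderiv
      have hze : z * e = ‖z‖ := by rw [mul_comm]; exact conj_div_norm_mul_self z
      rw [deriv_const_mul_field', ← mul_assoc, mul_assoc (t : ℂ), hze, ← Complex.ofReal_mul,
        Complex.re_ofReal_mul]
      simp only [Complex.sub_re, Complex.one_re] at hderiv
      exact mul_le_mul_of_nonneg_left (by linarith) (mul_nonneg ht.1.le (norm_nonneg z))
  calc (1 + 2 * M) * ‖z‖ - 2 * M * (1 + ‖z‖) * Real.log (1 + ‖z‖)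
      ≤ (e * φ z).re := by simpa [h0, mul_assoc] using hrot
    _ ≤ ‖e * φ z‖ := Complex.re_le_norm _
    _ ≤ ‖φ z‖ := by
      rw [norm_mul]
      exact mul_le_of_le_one_left (norm_nonneg _) (norm_conj_div_norm_le_one _)

theorem growth_upper_bound (hφ : DifferentiableOn ℂ φ (ball 0 1)) (h0 : φ 0 = 0)
    (h1 : deriv φ 0 = 1) (hre : ∀ z ∈ ball (0 : ℂ) 1, -M < (z * deriv (deriv φ) z).re)
    (hz : z ∈ ball (0 : ℂ) 1) :
    ‖φ z‖ ≤ 1 + 2 * M := by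
  have hM : 0 ≤ M := by simpa using (hre 0 (mem_ball_self one_pos)).le
  have hz1 := mem_ball_zero_iff.mp hz
  have hG : ∀ s ∈ Icc 0 ‖z‖,
      HasDerivAt (fun s => s + 2 * M * (s + (1 - s) * Real.log (1 - s)))
        (1 - 2 * M * Real.log (1 - s)) s := fun s hs => by
    have h1s : 1 - s ≠ 0 := by linarith [hs.2]
    refine ((hasDerivAt_id s).add ((((hasDerivAt_id s).add (((hasDerivAt_id s).const_sub 1).mul
      (((hasDerivAt_id s).const_sub 1).log h1s)))).const_mul (2 * M))).congr_deriv ?_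
    simp only [id]
    field_simp
    ring
  have hbound := norm_sub_le_of_radial hφ hz hG fun t ht => by
    have hw := ofReal_mul_mem_ball (Ioo_subset_Icc_self ht) hz
    have hderiv := norm_sub_le_neg_two_mul_log (hφ.deriv isOpen_ball) hre hw
    rw [h1, norm_ofReal_mul_of_nonneg ht.1.le] at hderiv
    rw [norm_mul, norm_ofReal_mul_of_nonneg ht.1.le]
    refine mul_le_mul_of_nonneg_left ?_ (mul_nonneg ht.1.le (norm_nonneg z))
    linarith [norm_le_norm_add_norm_sub' (deriv φ (t * z)) 1, norm_one (α := ℂ)]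
  have hlog : (1 - ‖z‖) * Real.log (1 - ‖z‖) ≤ 0 :=
    mul_nonpos_of_nonneg_of_nonpos (by linarith)
      (Real.log_nonpos (by linarith) (by linarith [norm_nonneg z]))
  simp only [h0, sub_zero, Real.log_one, mul_zero, add_zero] at hbound
  nlinarith

end Growth

lemma exists_norm_eq_one_mul_eq_conj (v : ℂ) : ∃ ε : ℂ, ‖ε‖ = 1 ∧ ε * v = conj v := by
  rcases eq_or_ne v 0 with rfl | hv
  · exact ⟨1, norm_one, by simp⟩
  · refine ⟨conj v / v, ?_, div_mul_cancel₀ _ hv⟩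
    rw [norm_div, Complex.norm_conj, div_self (norm_ne_zero_iff.mpr hv)]

lemma deriv_add_const_mul {h g : ℂ → ℂ} {z : ℂ} (ε : ℂ) (hh : DifferentiableAt ℂ h z)
    (hg : DifferentiableAt ℂ g z) :
    deriv (fun w => h w + ε * g w) z = deriv h z + ε * deriv g z := by
  rw [deriv_fun_add hh (hg.const_mul ε), deriv_const_mul_field']

lemma deriv_deriv_add_const_mul {h g : ℂ → ℂ} {s : Set ℂ} {z : ℂ} (ε : ℂ)
    (hs : IsOpen s) (hh : DifferentiableOn ℂ h s) (hg : DifferentiableOn ℂ g s) (hz : z ∈ s) :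
    deriv (deriv fun w => h w + ε * g w) z = deriv (deriv h) z + ε * deriv (deriv g) z := by
  have hev : deriv (fun w => h w + ε * g w) =ᶠ[𝓝 z] fun w => deriv h w + ε * deriv g w := by
    filter_upwards [hs.mem_nhds hz] with w hw
    exact deriv_add_const_mul ε (hh.differentiableAt (hs.mem_nhds hw))
      (hg.differentiableAt (hs.mem_nhds hw))
  rw [hev.deriv_eq, deriv_add_const_mul ε ((hh.deriv hs).differentiableAt (hs.mem_nhds hz))
    ((hg.deriv hs).differentiableAt (hs.mem_nhds hz))]

theorem le_liminf_comap_norm_nhdsLT {u : ℂ → ℝ} {L : ℝ → ℝ} {l C : ℝ}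
    (hL : Tendsto L (𝓝[<] 1) (𝓝 l)) (hlow : ∀ z ∈ ball (0 : ℂ) 1, L ‖z‖ ≤ u z)
    (hup : ∀ z ∈ ball (0 : ℂ) 1, u z ≤ C) :
    l ≤ liminf u (comap (fun z : ℂ => ‖z‖) (𝓝[<] 1)) := by
  have hne : (comap (fun z : ℂ => ‖z‖) (𝓝[<] 1)).NeBot := by
    refine NeBot.comap_of_range_mem inferInstance (mem_nhdsWithin_of_mem_nhds ?_)
    refine mem_of_superset (Ioi_mem_nhds zero_lt_one) fun r hr => ?_
    exact ⟨r, by simp [abs_of_pos (mem_Ioi.mp hr)]⟩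
  have hball : ∀ᶠ z in comap (fun z : ℂ => ‖z‖) (𝓝[<] 1), z ∈ ball (0 : ℂ) 1 :=
    tendsto_comap.eventually (self_mem_nhdsWithin (s := Iio 1)) |>.mono
      fun z hz => mem_ball_zero_iff.mpr hz
  have hLz := hL.comp (tendsto_comap (f := fun z : ℂ => ‖z‖))
  calc l = liminf (L ∘ fun z : ℂ => ‖z‖) (comap (fun z : ℂ => ‖z‖) (𝓝[<] 1)) :=
        hLz.liminf_eq.symm
    _ ≤ liminf u (comap (fun z : ℂ => ‖z‖) (𝓝[<] 1)) :=
        liminf_le_liminf (hball.mono hlow) hLz.isBoundedUnder_ge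
          (isBoundedUnder_of_eventually_le (hball.mono hup)).isCoboundedUnder_ge

section PH0

variable {M : ℝ} {a b : ℕ → ℂ} {h g : ℂ → ℂ}

theorem PH0.normalized_left (hf : PH0 M a b h g) :
    DifferentiableOn ℂ h (ball 0 1) ∧ h 0 = 0 ∧ deriv h 0 = 1 :=
  differentiableOn_of_hasSum_sub_mul (by simpa using hf.1)

theorem PH0.normalized_right (hf : PH0 M a b h g) :
    DifferentiableOn ℂ g (ball 0 1) ∧ g 0 = 0 ∧ deriv g 0 = 0 :=
  differentiableOn_of_hasSum_sub_mul (c₁ := 0) (by simpa using hf.2.1)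

theorem PH0.growth_bounds (hf : PH0 M a b h g) {z : ℂ}
    (hz : z ∈ ball (0 : ℂ) 1) :
    (1 + 2 * M) * ‖z‖ - 2 * M * (1 + ‖z‖) * Real.log (1 + ‖z‖) ≤ ‖h z + conj (g z)‖ ∧
      ‖h z + conj (g z)‖ ≤ 1 + 2 * M := by
  obtain ⟨hhd, hh0, hh1⟩ := hf.normalized_left
  obtain ⟨hgd, hg0, hg1⟩ := hf.normalized_right
  obtain ⟨ε, hε, hεg⟩ := exists_norm_eq_one_mul_eq_conj (g z)
  have hφ : DifferentiableOn ℂ (fun w => h w + ε * g w) (ball 0 1) := hhd.add (hgd.const_mul ε)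
  have h0 : h 0 + ε * g 0 = 0 := by simp [hh0, hg0]
  have h1 : deriv (fun w => h w + ε * g w) 0 = 1 := by
    rw [deriv_add_const_mul ε (hhd.differentiableAt (isOpen_ball.mem_nhds (mem_ball_self one_pos)))
      (hgd.differentiableAt (isOpen_ball.mem_nhds (mem_ball_self one_pos))), hh1, hg1, mul_zero,
      add_zero]
  have hreφ : ∀ w ∈ ball (0 : ℂ) 1, -M < (w * deriv (deriv fun w => h w + ε * g w) w).re := by
    intro w hw
    rw [deriv_deriv_add_const_mul ε isOpen_ball hhd hgd hw, mul_add, Complex.add_re,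
      mul_left_comm]
    have hεre := (abs_le.mp (Complex.abs_re_le_norm (ε * (w * deriv (deriv g) w)))).1
    rw [norm_mul, hε, one_mul] at hεre
    linarith [hf.2.2 w hw]
  rw [← hεg]
  exact ⟨growth_lower_bound hφ h0 h1 hreφ hz,
    growth_upper_bound (φ := fun w => h w + ε * g w) hφ h0 h1 hreφ hz⟩

end PH0

theorem dist_boundary_lower_bound_general (M : ℝ) (a b : ℕ → ℂ) (h g : ℂ → ℂ)
    (hf : PH0 M a b h g) :
    (1 + 2 * M * ∑' n : ℕ, (-1 : ℝ) ^ (n + 1) / (((n : ℝ) + 2) * ((n : ℝ) + 1))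
        = 1 + 2 * M * (1 - 2 * Real.log 2)) ∧
    1 + 2 * M * (1 - 2 * Real.log 2)
        ≤ bdyDist (fun z => h z + (starRingEnd ℂ) (g z)) := by
  refine ⟨by rw [tsum_neg_one_pow_div_mul], ?_⟩
  have hL : Tendsto (fun r : ℝ => (1 + 2 * M) * r - 2 * M * (1 + r) * Real.log (1 + r))
      (𝓝[<] 1) (𝓝 (1 + 2 * M * (1 - 2 * Real.log 2))) := by
    have : ContinuousAt (fun r : ℝ => (1 + 2 * M) * r - 2 * M * (1 + r) * Real.log (1 + r)) 1 := by
      fun_prop (disch := norm_num)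
    convert this.tendsto.mono_left nhdsWithin_le_nhds using 2
    norm_num
    ring
  rw [bdyDist, hf.normalized_left.2.1, hf.normalized_right.2.1, map_zero, add_zero]
  simp only [sub_zero]
  exact le_liminf_comap_norm_nhdsLT hL (fun z hz => (hf.growth_bounds hz).1)
    fun z hz => (hf.growth_bounds hz).2

/-- Distance to the boundary bound: `d(f(0), ∂f(𝔻)) ≥ 1 + 2M ∑_{n≥2} (-1)^{n-1}/(n(n-1))
 = 1 + 2M(1 - 2 log 2)` for `f ∈ P⁰_H(M)`. -/
theorem dist_boundary_lower_bound (M : ℝ) (hM : 0 < M) (a b : ℕ → ℂ) (h g : ℂ → ℂ)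
    (hf : PH0 M a b h g) :
    (1 + 2 * M * ∑' n : ℕ, (-1 : ℝ) ^ (n + 1) / (((n : ℝ) + 2) * ((n : ℝ) + 1))
        = 1 + 2 * M * (1 - 2 * Real.log 2)) ∧
    1 + 2 * M * (1 - 2 * Real.log 2)
        ≤ bdyDist (fun z => h z + (starRingEnd ℂ) (g z)) :=
  dist_boundary_lower_bound_general M a b h g hf
end

section
/- Let M > 0, let m ≥ 1 and N ≥ 2 be integers, and let r₀ ∈ (0,1) satisfy r₀^m − 1 + 2M(r₀^m + r₀ − 1 + (1−r₀^m)ln(1−r₀^m) + (1−r₀)ln(1−r₀) − Σ_{n=2}^{N−1} r₀ⁿ/(n(n−1)) + 2 ln 2) = 0. Then for the function f_M(z) = z + 2M Σ_{n=2}^∞ zⁿ/(n(n−1)) (whose coefficients are a_n = 2M/(n(n−1)), b_n = 0), equality holds: |f_M(r₀^m)| + Σ_{n=N}^∞ (2M/(n(n−1))) r₀ⁿ = 1 + 2M(1 − 2 ln 2) = d(f_M(0), ∂f_M(𝔻)). -/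
open Filter MeasureTheory

/-- The extremal function `f_M z = z + 2M ∑_{n≥2} z^n/(n(n-1))`. -/
noncomputable def fM (M : ℝ) : ℂ → ℂ :=
  fun z => z + 2 * (M : ℂ) * ∑' n : ℕ, z ^ (n + 2) / (((n : ℂ) + 2) * ((n : ℂ) + 1))

/-!
On the unit disk `fM M z = z + 2M (z + (1 - z) log (1 - z))`, so `fM M' z = 1 - 2M log (1 - z)`.
With this closed form at `r₀ ^ m`, and `∑ xⁿ / (n (n - 1)) = x + (1 - x) log (1 - x)` for the tail,
the first identity is the defining equation of `r₀`. For the boundary distance, integrating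
`Re fM M'(t z) ≥ 1 - 2M log (1 + t |z|)` along the radius gives `|fM M z| ≥ L |z|` with
`L s = (1 + 2M) s - 2M (1 + s) log (1 + s)`, while `fM M (-s) = -L s`; so the liminf is
`L 1 = 1 + 2M (1 - 2 log 2)`, which is nonnegative by the first identity.
-/

open Topology

theorem Complex.hasSum_pow_add_two_div_mul {z : ℂ} (hz : ‖z‖ < 1) :
    HasSum (fun n : ℕ => z ^ (n + 2) / (((n : ℂ) + 2) * ((n : ℂ) + 1)))
      (z + (1 - z) * log (1 - z)) := by
  have h₁ : HasSum (fun n : ℕ => z ^ (n + 2) / ((n : ℂ) + 1)) (z * -log (1 - z)) :=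
    ((hasSum_taylorSeries_neg_log' hz).mul_left z).congr_fun fun n => by ring
  have h₂ : HasSum (fun n : ℕ => z ^ (n + 2) / ((n : ℂ) + 2)) (-log (1 - z) - z) := by
    simpa [add_assoc, one_add_one_eq_two] using
      (hasSum_nat_add_iff' 1).mpr (hasSum_taylorSeries_neg_log' hz)
  rw [show z + (1 - z) * log (1 - z) = z * -log (1 - z) - (-log (1 - z) - z) by ring]
  refine (h₁.sub h₂).congr_fun fun n => ?_
  have : (n : ℂ) + 2 ≠ 0 := by exact_mod_cast (n + 1).succ_ne_zero
  field_simp [Nat.cast_add_one_ne_zero n]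
  ring

theorem Real.hasSum_pow_add_two_div_mul {x : ℝ} (hx : |x| < 1) :
    HasSum (fun n : ℕ => x ^ (n + 2) / (((n : ℝ) + 2) * ((n : ℝ) + 1)))
      (x + (1 - x) * log (1 - x)) := by
  have h := Complex.hasSum_pow_add_two_div_mul (z := x) (by simpa using hx)
  rw [← Complex.ofReal_one, ← Complex.ofReal_sub,
    ← Complex.ofReal_log (by linarith [abs_lt.1 hx])] at h
  exact_mod_cast h

theorem Real.hasSum_pow_div_mul_sub_one_nat_add {x : ℝ} (hx : |x| < 1) (N : ℕ) :
    HasSum (fun n : ℕ => x ^ (n + N) / (((n : ℝ) + N) * ((n : ℝ) + N - 1)))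
      (x + (1 - x) * log (1 - x)
        - ∑ n ∈ Finset.Icc 2 (N - 1), x ^ n / ((n : ℝ) * ((n : ℝ) - 1))) := by
  set f : ℕ → ℝ := fun n => x ^ n / ((n : ℝ) * ((n : ℝ) - 1))
  have hf : HasSum f (x + (1 - x) * log (1 - x)) := by
    have hf01 : ∑ n ∈ Finset.range 2, f n = 0 := by simp [f, Finset.sum_range_succ]
    rw [← hasSum_nat_add_iff' 2, hf01, sub_zero]
    exact (Real.hasSum_pow_add_two_div_mul hx).congr_fun fun n => by simp only [f]; push_cast; ring
  have hIcc : ∑ n ∈ Finset.range N, f n = ∑ n ∈ Finset.Icc 2 (N - 1), f n := by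
    refine (Finset.sum_subset (fun n hn => ?_) fun n hn hn' => ?_).symm
    · simp only [Finset.mem_Icc, Finset.mem_range] at hn ⊢; omega
    · simp only [Finset.mem_Icc, Finset.mem_range, not_and_or, not_le] at hn hn'
      obtain rfl | rfl : n = 0 ∨ n = 1 := by omega
      all_goals simp [f]
  rw [← hIcc]
  exact ((hasSum_nat_add_iff' N).mpr hf).congr_fun fun n => by simp only [f]; push_cast; ring

theorem fM_eq_of_norm_lt_one (M : ℝ) {z : ℂ} (hz : ‖z‖ < 1) :
    fM M z = z + 2 * M * (z + (1 - z) * Complex.log (1 - z)) := by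
  rw [fM, (Complex.hasSum_pow_add_two_div_mul hz).tsum_eq]

theorem fM_ofReal (M : ℝ) {x : ℝ} (hx : |x| < 1) :
    fM M x = ↑(x + 2 * M * (x + (1 - x) * Real.log (1 - x))) := by
  rw [fM_eq_of_norm_lt_one M (by simpa using hx), ← Complex.ofReal_one, ← Complex.ofReal_sub,
    ← Complex.ofReal_log (by linarith [abs_lt.1 hx])]
  push_cast
  ring

theorem hasDerivAt_fM (M : ℝ) {z : ℂ} (hz : ‖z‖ < 1) :
    HasDerivAt (fM M) (1 - 2 * M * Complex.log (1 - z)) z := by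
  have hslit : 1 - z ∈ Complex.slitPlane := by
    simpa [sub_eq_add_neg] using Complex.mem_slitPlane_of_norm_lt_one (norm_neg z ▸ hz)
  have hsub : HasDerivAt (fun w : ℂ => 1 - w) (-1) z := (hasDerivAt_id z).const_sub 1
  have hclosed := (hasDerivAt_id z).add
    (((hasDerivAt_id z).add (hsub.mul (hsub.clog hslit))).const_mul (2 * (M : ℂ)))
  have hfM : (fun w => w + 2 * M * (w + (1 - w) * Complex.log (1 - w))) =ᶠ[𝓝 z] fM M :=
    Filter.eventuallyEq_of_mem (Metric.isOpen_ball.mem_nhds (mem_ball_zero_iff.2 hz))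
      fun w hw => (fM_eq_of_norm_lt_one M (mem_ball_zero_iff.1 hw)).symm
  refine (hclosed.congr_of_eventuallyEq hfM.symm).congr_deriv ?_
  field_simp [Complex.slitPlane_ne_zero hslit]
  ring

noncomputable def fMLower (M s : ℝ) : ℝ := (1 + 2 * M) * s - 2 * M * (1 + s) * Real.log (1 + s)

theorem hasDerivAt_fMLower (M : ℝ) {s : ℝ} (hs : 0 < 1 + s) :
    HasDerivAt (fMLower M) (1 - 2 * M * Real.log (1 + s)) s := by
  have hadd : HasDerivAt (fun t : ℝ => 1 + t) 1 s := (hasDerivAt_id s).const_add 1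
  have := ((hasDerivAt_id s).const_mul (1 + 2 * M)).sub
    ((hadd.const_mul (2 * M)).mul (hadd.log hs.ne'))
  refine this.congr_deriv ?_
  field_simp
  ring

theorem one_sub_two_mul_log_le_re {M : ℝ} (hM : 0 ≤ M) {w : ℂ} (hw : ‖w‖ < 1) :
    1 - 2 * M * Real.log (1 + ‖w‖) ≤ (1 - 2 * M * Complex.log (1 - w)).re := by
  have hpos : 0 < ‖1 - w‖ := norm_pos_iff.2 (sub_ne_zero.2 fun h => by simp [← h] at hw)
  have hlog : Real.log ‖1 - w‖ ≤ Real.log (1 + ‖w‖) :=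
    Real.log_le_log hpos ((norm_sub_le 1 w).trans_eq (by rw [norm_one]))
  have hre : (1 - 2 * M * Complex.log (1 - w)).re = 1 - 2 * M * Real.log ‖1 - w‖ := by
    simp [Complex.log_re]
  rw [hre]
  nlinarith

theorem fM_zero (M : ℝ) : fM M 0 = 0 := by simp [fM]

theorem fMLower_norm_le_norm_fM {M : ℝ} (hM : 0 ≤ M) {z : ℂ} (hz : ‖z‖ < 1) :
    fMLower M ‖z‖ ≤ ‖fM M z‖ := by
  rcases (norm_nonneg z).eq_or_lt with hr0 | hr0
  · simp [fMLower, ← hr0]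
  have htz : ∀ t ∈ Set.Icc (0 : ℝ) 1, ‖(t : ℂ) * z‖ = t * ‖z‖ := fun t ht => by
    rw [norm_mul, Complex.norm_real, Real.norm_of_nonneg ht.1]
  have htz1 : ∀ t ∈ Set.Icc (0 : ℝ) 1, ‖(t : ℂ) * z‖ < 1 := fun t ht => by
    rw [htz t ht]; nlinarith [ht.2]
  -- `χ 0 = 0`, and `χ` increases because `Re (fM M)' w ≥ (fMLower M)' ‖w‖` on the disk
  set χ : ℝ → ℝ := fun t => (starRingEnd ℂ z * fM M (t * z)).re - ‖z‖ * fMLower M (t * ‖z‖)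
  have hχ : ∀ t ∈ Set.Icc (0 : ℝ) 1, HasDerivAt χ
      ((starRingEnd ℂ z * ((1 - 2 * M * Complex.log (1 - t * z)) * z)).re
        - ‖z‖ * ((1 - 2 * M * Real.log (1 + t * ‖z‖)) * ‖z‖)) t := by
    intro t ht
    have hfM := (((hasDerivAt_fM M (htz1 t ht)).comp (t : ℂ) (hasDerivAt_mul_const z)).const_mul
      (starRingEnd ℂ z)).real_of_complex
    have hL := ((hasDerivAt_fMLower M (by nlinarith [ht.1] : 0 < 1 + t * ‖z‖)).comp t
      (hasDerivAt_mul_const ‖z‖)).const_mul ‖z‖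
    exact hfM.sub hL
  have hmono : MonotoneOn χ (Set.Icc 0 1) := by
    refine monotoneOn_of_hasDerivWithinAt_nonneg (convex_Icc 0 1)
      (fun t ht => (hχ t ht).continuousAt.continuousWithinAt)
      (fun t ht => (hχ t (interior_subset ht)).hasDerivWithinAt) fun t ht => ?_
    have ht := interior_subset ht
    have hle := one_sub_two_mul_log_le_re hM (htz1 t ht)
    rw [htz t ht] at hle
    rw [mul_comm _ z, ← mul_assoc, Complex.conj_mul', ← Complex.ofReal_pow, Complex.re_ofReal_mul]
    nlinarith
  have h01 := hmono (Set.left_mem_Icc.2 zero_le_one) (Set.right_mem_Icc.2 zero_le_one) zero_le_one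
  have hre : (starRingEnd ℂ z * fM M z).re ≤ ‖z‖ * ‖fM M z‖ := by
    simpa using Complex.re_le_norm (starRingEnd ℂ z * fM M z)
  have hL0 : fMLower M 0 = 0 := by simp [fMLower]
  simp only [χ, Complex.ofReal_zero, Complex.ofReal_one, zero_mul, one_mul, fM_zero, mul_zero,
    Complex.zero_re, hL0, sub_zero] at h01
  exact le_of_mul_le_mul_left (by linarith) hr0

theorem Filter.liminf_eq_of_le_of_tendsto {α β : Type*} {F : Filter α} {G : Filter β} [G.NeBot]
    {u g : α → ℝ} {φ : β → α} {d : ℝ} (hg : Tendsto g F (𝓝 d)) (hgu : ∀ᶠ x in F, g x ≤ u x)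
    (hφ : Tendsto φ G F) (huφ : Tendsto (u ∘ φ) G (𝓝 d)) : liminf u F = d := by
  have : F.NeBot := hφ.neBot
  have hbdd : F.IsBoundedUnder (· ≥ ·) u := hg.isBoundedUnder_ge.mono_ge hgu
  have hcobdd : F.IsCoboundedUnder (· ≥ ·) u :=
    IsCobounded.mono (map_mono hφ) huφ.isCoboundedUnder_ge
  refine le_antisymm ?_ ?_
  · calc liminf u F ≤ liminf (u ∘ φ) G :=
          hφ.liminf_le_liminf_comp huφ.isCoboundedUnder_ge hbdd
      _ = d := huφ.liminf_eq
  · calc d = liminf g F := hg.liminf_eq.symm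
      _ ≤ liminf u F := liminf_le_liminf hgu hg.isBoundedUnder_ge hcobdd

theorem fM_neg_ofReal (M : ℝ) {s : ℝ} (hs : |s| < 1) : fM M (-s) = -(fMLower M s : ℂ) := by
  rw [← Complex.ofReal_neg, fM_ofReal M (by rwa [abs_neg]), fMLower]
  push_cast
  ring_nf

theorem fMLower_one (M : ℝ) : fMLower M 1 = 1 + 2 * M * (1 - 2 * Real.log 2) := by
  norm_num [fMLower]
  ring

theorem bdyDist_fM {M : ℝ} (hM : 0 ≤ M) (hd : 0 ≤ 1 + 2 * M * (1 - 2 * Real.log 2)) :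
    bdyDist (fM M) = 1 + 2 * M * (1 - 2 * Real.log 2) := by
  have hL : Tendsto (fMLower M) (𝓝 1) (𝓝 (1 + 2 * M * (1 - 2 * Real.log 2))) :=
    fMLower_one M ▸ (hasDerivAt_fMLower M (by norm_num)).continuousAt
  have hpos : ∀ᶠ s in 𝓝[<] (1 : ℝ), s ∈ Set.Ioo 0 1 := Ioo_mem_nhdsLT one_pos
  have hdisk : ∀ᶠ z in comap (fun z : ℂ => ‖z‖) (𝓝[<] 1), ‖z‖ < 1 :=
    preimage_mem_comap self_mem_nhdsWithin
  refine liminf_eq_of_le_of_tendsto (G := 𝓝[<] 1) (φ := fun s : ℝ => -(s : ℂ))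
    (hL.comp (tendsto_comap.mono_right nhdsWithin_le_nhds)) ?_ ?_ ?_
  · filter_upwards [hdisk] with z hz
    simpa [fM_zero] using fMLower_norm_le_norm_fM hM hz
  · refine tendsto_comap_iff.2 (tendsto_id.congr' ?_)
    filter_upwards [hpos] with s hs
    simp [abs_of_pos hs.1]
  · rw [← abs_of_nonneg hd]
    refine (hL.abs.mono_left nhdsWithin_le_nhds).congr' ?_
    filter_upwards [hpos] with s hs
    simp [fM_zero, fM_neg_ofReal M (abs_lt.2 ⟨by linarith [hs.1], hs.2⟩)]

theorem bohr_rogosinski_pow_sharp_general (M : ℝ) (hM : 0 < M) (m N : ℕ) (hm : 1 ≤ m)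
    (r₀ : ℝ) (hr₀ : r₀ ∈ Set.Ioo (0 : ℝ) 1)
    (hroot : r₀ ^ m - 1 + 2 * M * (r₀ ^ m + r₀ - 1
      + (1 - r₀ ^ m) * Real.log (1 - r₀ ^ m) + (1 - r₀) * Real.log (1 - r₀)
      - ∑ n ∈ Finset.Icc 2 (N - 1), r₀ ^ n / ((n : ℝ) * ((n : ℝ) - 1)) + 2 * Real.log 2) = 0) :
    (‖fM M ((r₀ : ℂ) ^ m)‖
        + ∑' n : ℕ, (2 * M / (((n : ℝ) + N) * ((n : ℝ) + N - 1))) * r₀ ^ (n + N)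
      = 1 + 2 * M * (1 - 2 * Real.log 2)) ∧
    bdyDist (fM M) = 1 + 2 * M * (1 - 2 * Real.log 2) := by
  obtain ⟨hr0, hr1⟩ := hr₀
  have hr : |r₀| < 1 := by rwa [abs_of_pos hr0]
  have hρ : |r₀ ^ m| < 1 := by
    rw [abs_of_pos (by positivity)]; exact pow_lt_one₀ hr0.le hr1 (by omega)
  have hS : 0 ≤ r₀ ^ m + (1 - r₀ ^ m) * Real.log (1 - r₀ ^ m) :=
    (Real.hasSum_pow_add_two_div_mul hρ).nonneg fun n => by positivity
  have hnorm : ‖fM M ((r₀ : ℂ) ^ m)‖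
      = r₀ ^ m + 2 * M * (r₀ ^ m + (1 - r₀ ^ m) * Real.log (1 - r₀ ^ m)) := by
    rw [← Complex.ofReal_pow, fM_ofReal M hρ, Complex.norm_real,
      Real.norm_of_nonneg (by positivity)]
  have htail :
      HasSum (fun n : ℕ => (2 * M / (((n : ℝ) + N) * ((n : ℝ) + N - 1))) * r₀ ^ (n + N)) _ :=
    ((Real.hasSum_pow_div_mul_sub_one_nat_add hr N).mul_left (2 * M)).congr_fun fun n => by ring
  have hsum : ‖fM M ((r₀ : ℂ) ^ m)‖
      + ∑' n : ℕ, (2 * M / (((n : ℝ) + N) * ((n : ℝ) + N - 1))) * r₀ ^ (n + N)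
      = 1 + 2 * M * (1 - 2 * Real.log 2) := by
    rw [hnorm, htail.tsum_eq]
    linear_combination hroot
  refine ⟨hsum, bdyDist_fM hM.le (hsum ▸ add_nonneg (norm_nonneg _) (tsum_nonneg fun n => ?_))⟩
  have : 0 ≤ ((n + N : ℕ) : ℝ) * ((n + N : ℕ) - 1) := by
    rcases n + N with _ | k <;> simp; positivity
  push_cast at this
  positivity

/-- Sharpness of the radius of Theorem 2.7: equality for the extremal function `f_M`. -/
theorem bohr_rogosinski_pow_sharp (M : ℝ) (hM : 0 < M) (m N : ℕ) (hm : 1 ≤ m) (hN : 2 ≤ N)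
    (r₀ : ℝ) (hr₀ : r₀ ∈ Set.Ioo (0 : ℝ) 1)
    (hroot : r₀ ^ m - 1 + 2 * M * (r₀ ^ m + r₀ - 1
      + (1 - r₀ ^ m) * Real.log (1 - r₀ ^ m) + (1 - r₀) * Real.log (1 - r₀)
      - ∑ n ∈ Finset.Icc 2 (N - 1), r₀ ^ n / ((n : ℝ) * ((n : ℝ) - 1)) + 2 * Real.log 2) = 0) :
    (‖fM M ((r₀ : ℂ) ^ m)‖
        + ∑' n : ℕ, (2 * M / (((n : ℝ) + N) * ((n : ℝ) + N - 1))) * r₀ ^ (n + N)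
      = 1 + 2 * M * (1 - 2 * Real.log 2)) ∧
    bdyDist (fM M) = 1 + 2 * M * (1 - 2 * Real.log 2) :=
  bohr_rogosinski_pow_sharp_general M hM m N hm r₀ hr₀ hroot
end
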